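/- arXiv:1609.01695 — 3 statements merged into one kernel-verified Lean document; each statement's English description precedes it below -/
import Mathlib

section
/- Let A be a ring, J an ideal, and a₁, a₂, u₁, u₂ ∈ A pairwise commuting elements with u₁a₁ + u₂a₂ = 1. If π(a₁) and π(a₂) are Drazin invertible in A/J, then π(a₁a₂) is Drazin invertible in A/J; i.e., the product of two B-Fredholm elements satisfying a commuting Bézout identity is B-Fredholm. -/
/-!
A Drazin inverse `c` of `b` lies in the double commutant of `b`: if `x` commutes with `b`, then
`c x = e x c` and `x c = c x e` for the idempotent `e = b c`, which absorbs `c`, so `c x = x c`.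
Hence the Drazin inverses of two commuting elements commute with each other and with both
elements, and their product is a Drazin inverse of the product, of index the sum of the indices.
-/

/-- `c` is a Drazin inverse of `b` in a ring. -/
def IsDrazinInverse {R : Type*} [Ring R] (b c : R) : Prop :=
  b * c = c * b ∧ c * b * c = c ∧ ∃ k : ℕ, b ^ (k + 1) * c = b ^ k

theorem pow_succ_mul_eq_pow_of_le {M : Type*} [Monoid M] {b c : M} {k n : ℕ}
    (hk : b ^ (k + 1) * c = b ^ k) (hkn : k ≤ n) : b ^ (n + 1) * c = b ^ n := by
  obtain ⟨j, rfl⟩ := Nat.exists_eq_add_of_le hkn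
  induction j with
  | zero => exact hk
  | succ j ih =>
    rw [← add_assoc, pow_succ' b (k + j + 1), mul_assoc, ih (Nat.le_add_right k j), ← pow_succ']

namespace IsDrazinInverse

variable {R : Type*} [Ring R] {b c : R}

theorem commute (h : IsDrazinInverse b c) : Commute b c := h.1

theorem pow_succ_mul_pow (h : IsDrazinInverse b c) (n : ℕ) : c ^ (n + 1) * b ^ n = c := by
  induction n with
  | zero => simp
  | succ n ih =>
    calc c ^ (n + 2) * b ^ (n + 1) = c * (c ^ (n + 1) * b ^ n) * b := by
          rw [pow_succ' c (n + 1), pow_succ b n]; simp only [mul_assoc]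
      _ = c * (b * c) := by rw [ih, mul_assoc, h.commute.eq]
      _ = c := by rw [← mul_assoc, h.2.1]

theorem pow_mul_pow_succ (h : IsDrazinInverse b c) (n : ℕ) : b ^ n * c ^ (n + 1) = c := by
  rw [(h.commute.pow_pow n (n + 1)).eq, h.pow_succ_mul_pow]

theorem pow_succ_mul_pow_succ (h : IsDrazinInverse b c) (n : ℕ) :
    c ^ (n + 1) * b ^ (n + 1) = c * b := by
  rw [pow_succ b, ← mul_assoc, h.pow_succ_mul_pow]

theorem pow_succ_mul_pow_succ' (h : IsDrazinInverse b c) (n : ℕ) :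
    b ^ (n + 1) * c ^ (n + 1) = b * c := by
  rw [pow_succ' b, mul_assoc, h.pow_mul_pow_succ]

theorem commute_of_commute (h : IsDrazinInverse b c) {x : R} (hx : Commute x b) :
    Commute x c := by
  obtain ⟨k, hk⟩ := h.2.2
  have hk' : c * b ^ (k + 1) = b ^ k := by rw [← (h.commute.pow_left _).eq, hk]
  have hcx : c * x = b * c * (x * c) :=
    calc c * x = c ^ (k + 1) * (b ^ k * x) := by rw [← mul_assoc, h.pow_succ_mul_pow]
      _ = c ^ (k + 1) * (x * (b ^ (k + 1) * c)) := by rw [hk, (hx.pow_right k).eq]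
      _ = c ^ (k + 1) * b ^ (k + 1) * (x * c) := by
          rw [← mul_assoc x, (hx.pow_right _).eq, mul_assoc, mul_assoc]
      _ = b * c * (x * c) := by rw [h.pow_succ_mul_pow_succ, h.commute.eq]
  have hxc : x * c = c * x * (b * c) :=
    calc x * c = (x * b ^ k) * c ^ (k + 1) := by rw [mul_assoc, h.pow_mul_pow_succ]
      _ = c * (x * b ^ (k + 1)) * c ^ (k + 1) := by
          rw [(hx.pow_right k).eq, ← hk', (hx.pow_right _).eq]
          simp only [mul_assoc]
      _ = c * x * (b * c) := by
          rw [mul_assoc, mul_assoc, h.pow_succ_mul_pow_succ', ← mul_assoc]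
  have hbcc : b * c * c = c := by rw [h.commute.eq, h.2.1]
  refine (calc c * x = b * c * (c * x * (b * c)) := by conv_lhs => rw [hcx, hxc]
    _ = b * c * c * x * (b * c) := by simp only [mul_assoc]
    _ = x * c := by rw [hbcc, hxc]).symm

theorem mul {a a' b' : R} (ha : IsDrazinInverse a a') (hb : IsDrazinInverse b b')
    (hab : Commute a b) : IsDrazinInverse (a * b) (a' * b') := by
  have hba' : Commute b a' := ha.commute_of_commute hab.symm
  have hab' : Commute a b' := hb.commute_of_commute hab
  have ha'b' : Commute a' b' := hb.commute_of_commute hba'.symm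
  obtain ⟨k₁, hk₁⟩ := ha.2.2
  obtain ⟨k₂, hk₂⟩ := hb.2.2
  refine ⟨((ha.commute.mul_right hab').mul_left (hba'.mul_right hb.commute)).eq, ?_, k₁ + k₂, ?_⟩
  · calc a' * b' * (a * b) * (a' * b') = a' * a * a' * (b' * b * b') := by
          simp only [mul_assoc, hab'.symm.left_comm, hba'.left_comm, ha'b'.symm.left_comm]
      _ = a' * b' := by rw [ha.2.1, hb.2.1]
  · rw [hab.mul_pow, hab.mul_pow, (hba'.pow_left _).mul_mul_mul_comm,
      pow_succ_mul_eq_pow_of_le hk₁ (Nat.le_add_right _ _),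
      pow_succ_mul_eq_pow_of_le hk₂ (Nat.le_add_left _ _)]

end IsDrazinInverse

theorem bFredholm_product_bezout_general
    {A : Type*} [Ring A] (J : TwoSidedIdeal A)
    (π : A →+* J.ringCon.Quotient)
    (a₁ a₂ : A)
    (h12 : a₁ * a₂ = a₂ * a₁)
    (hBF₁ : ∃ b₁ : A, IsDrazinInverse (π a₁) (π b₁))
    (hBF₂ : ∃ b₂ : A, IsDrazinInverse (π a₂) (π b₂)) :
    ∃ c, IsDrazinInverse (π (a₁ * a₂)) c := by
  obtain ⟨b₁, h₁⟩ := hBF₁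
  obtain ⟨b₂, h₂⟩ := hBF₂
  exact ⟨π b₁ * π b₂, map_mul π a₁ a₂ ▸ h₁.mul h₂ (Commute.map h12 π)⟩

/-- The product of two B-Fredholm elements satisfying a commuting Bézout identity
is B-Fredholm. -/
theorem bFredholm_product_bezout
    {A : Type*} [Ring A] (J : TwoSidedIdeal A)
    (π : A →+* J.ringCon.Quotient) (hπ : π = RingCon.mk' J.ringCon)
    (a₁ a₂ u₁ u₂ : A)
    (h12 : a₁ * a₂ = a₂ * a₁) (h1u1 : a₁ * u₁ = u₁ * a₁) (h1u2 : a₁ * u₂ = u₂ * a₁)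
    (h2u1 : a₂ * u₁ = u₁ * a₂) (h2u2 : a₂ * u₂ = u₂ * a₂) (hu12 : u₁ * u₂ = u₂ * u₁)
    (hbezout : u₁ * a₁ + u₂ * a₂ = 1)
    (hBF₁ : ∃ b₁ : A, IsDrazinInverse (π a₁) (π b₁))
    (hBF₂ : ∃ b₂ : A, IsDrazinInverse (π a₂) (π b₂)) :
    ∃ c, IsDrazinInverse (π (a₁ * a₂)) c :=
  bFredholm_product_bezout_general J π a₁ a₂ h12 hBF₁ hBF₂
end

section
/- Let A be a ring with ideal J carrying a trace τ (additive, ℂ-homogeneous, τ(xb) = τ(bx) for x ∈ J, b ∈ A). If a is B-Fredholm modulo J and j ∈ J, then a + j is B-Fredholm modulo J and the indices agree: i(a + j) = i(a), where i(x) = τ(x x₀ - x₀ x) for any Drazin inverse x₀ of x modulo J. -/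
namespace IsDrazinInverse

variable {R : Type*} [Ring R] {b c c' : R}

theorem op (h : IsDrazinInverse b c) : IsDrazinInverse (MulOpposite.op b) (MulOpposite.op c) := by
  obtain ⟨hbc, hcbc, k, hk⟩ := h
  simp only [IsDrazinInverse, ← MulOpposite.op_mul, ← MulOpposite.op_pow, MulOpposite.op_inj]
  refine ⟨hbc.symm, by rw [← mul_assoc, hcbc], k, ?_⟩
  rw [← (Commute.pow_left hbc (k + 1)).eq, hk]

theorem eq_mul_mul (h : IsDrazinInverse b c) (h' : IsDrazinInverse b c') : c = c * b * c' := by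
  obtain ⟨hbc, hcbc, -⟩ := h
  obtain ⟨-, -, k, hk⟩ := h'
  have hcomm : Commute c b := hbc.symm
  have hidem : IsIdempotentElem (c * b) := by
    rw [IsIdempotentElem, ← mul_assoc, hcbc]
  have hpow : b ^ (k + 2) * c' = b ^ (k + 1) := by
    rw [pow_succ' b (k + 1), mul_assoc, hk, ← pow_succ']
  calc c = (c * b) ^ (k + 1) * c := by rw [hidem.pow_succ_eq, hcbc]
    _ = c ^ (k + 2) * b ^ (k + 1) := by
      rw [hcomm.mul_pow, mul_assoc, ← (hcomm.pow_right _).eq, ← mul_assoc, ← pow_succ]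
    _ = c ^ (k + 2) * b ^ (k + 2) * c' := by rw [mul_assoc, hpow]
    _ = c * b * c' := by rw [← hcomm.mul_pow, hidem.pow_succ_eq]

/-- `eq_mul_mul` in the opposite ring gives `c' = c * b * c'`. -/
theorem unique (h : IsDrazinInverse b c) (h' : IsDrazinInverse b c') : c = c' := by
  have hop := congrArg MulOpposite.unop (h'.op.eq_mul_mul h.op)
  simp only [MulOpposite.unop_mul, MulOpposite.unop_op] at hop
  rw [hop, ← mul_assoc]
  exact h.eq_mul_mul h'

end IsDrazinInverse

section TraceOnIdeal

variable {A G : Type*} [Ring A] [AddGroup G] {J : TwoSidedIdeal A} {τ : A → G}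

theorem map_sub_of_additiveOn (hadd : ∀ x ∈ J, ∀ y ∈ J, τ (x + y) = τ x + τ y)
    {x y : A} (hx : x ∈ J) (hy : y ∈ J) : τ (x - y) = τ x - τ y :=
  eq_sub_of_add_eq (by rw [← hadd _ (J.sub_mem hx hy) _ hy, sub_add_cancel])

theorem mul_sub_mul_mem {x : A} (hx : x ∈ J) (b : A) : x * b - b * x ∈ J :=
  J.sub_mem (J.mul_mem_right _ _ hx) (J.mul_mem_left _ _ hx)

theorem trace_mul_sub_mul_eq_zero (hadd : ∀ x ∈ J, ∀ y ∈ J, τ (x + y) = τ x + τ y)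
    (hcomm : ∀ x ∈ J, ∀ b : A, τ (x * b) = τ (b * x)) {x : A} (hx : x ∈ J) (b : A) :
    τ (x * b - b * x) = 0 := by
  rw [map_sub_of_additiveOn hadd (J.mul_mem_right _ _ hx) (J.mul_mem_left _ _ hx), hcomm x hx b,
    sub_self]

theorem trace_commutator_eq_of_sub_mem (hadd : ∀ x ∈ J, ∀ y ∈ J, τ (x + y) = τ x + τ y)
    (hcomm : ∀ x ∈ J, ∀ b : A, τ (x * b) = τ (b * x)) {a a' a₀ b : A} (ha : a' - a ∈ J)
    (hb : b - a₀ ∈ J) (hc : a * a₀ - a₀ * a ∈ J) :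
    τ (a' * b - b * a') = τ (a * a₀ - a₀ * a) := by
  have hdecomp : a' * b - b * a' = a * a₀ - a₀ * a + ((a' - a) * b - b * (a' - a))
      - ((b - a₀) * a - a * (b - a₀)) := by
    noncomm_ring
  rw [hdecomp, map_sub_of_additiveOn hadd (J.add_mem hc (mul_sub_mul_mem ha b))
      (mul_sub_mul_mem hb a), hadd _ hc _ (mul_sub_mul_mem ha b),
    trace_mul_sub_mul_eq_zero hadd hcomm ha, trace_mul_sub_mul_eq_zero hadd hcomm hb,
    add_zero, sub_zero]

end TraceOnIdeal

theorem TwoSidedIdeal.mk'_eq_mk'_iff {A : Type*} [Ring A] (J : TwoSidedIdeal A) (x y : A) :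
    RingCon.mk' J.ringCon x = RingCon.mk' J.ringCon y ↔ x - y ∈ J :=
  (RingCon.eq _).trans (J.rel_iff x y)

theorem bFredholm_index_perturbation_ideal_general
    {A : Type*} [Ring A] (J : TwoSidedIdeal A)
    (π : A →+* J.ringCon.Quotient) (hπ : π = RingCon.mk' J.ringCon)
    (τ : A → ℂ)
    (hadd : ∀ x ∈ J, ∀ y ∈ J, τ (x + y) = τ x + τ y)
    (hcomm : ∀ x ∈ J, ∀ b : A, τ (x * b) = τ (b * x))
    (a j : A) (hj : j ∈ J)
    (hBF : ∃ a₀ : A, IsDrazinInverse (π a) (π a₀)) :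
    (∃ b : A, IsDrazinInverse (π (a + j)) (π b)) ∧
      ∀ a₀ b : A, IsDrazinInverse (π a) (π a₀) → IsDrazinInverse (π (a + j)) (π b) →
        τ ((a + j) * b - b * (a + j)) = τ (a * a₀ - a₀ * a) := by
  subst hπ
  have hπj : RingCon.mk' J.ringCon (a + j) = RingCon.mk' J.ringCon a :=
    (J.mk'_eq_mk'_iff _ _).2 (by simpa using hj)
  refine ⟨?_, fun a₀ b ha₀ hb => ?_⟩
  · obtain ⟨a₀, ha₀⟩ := hBF
    exact ⟨a₀, hπj ▸ ha₀⟩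
  · rw [hπj] at hb
    have hc : a * a₀ - a₀ * a ∈ J :=
      (J.mk'_eq_mk'_iff _ _).1 (by simpa only [map_mul] using ha₀.1)
    exact trace_commutator_eq_of_sub_mem hadd hcomm ((J.mk'_eq_mk'_iff _ _).1 hπj)
      ((J.mk'_eq_mk'_iff _ _).1 (hb.unique ha₀)) hc

/-- Perturbing a B-Fredholm element by an element of the ideal `J` preserves
B-Fredholmness and the trace index: `i(a + j) = i(a)`. -/
theorem bFredholm_index_perturbation_ideal
    {A : Type*} [Ring A] [Algebra ℂ A] (J : TwoSidedIdeal A)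
    (π : A →+* J.ringCon.Quotient) (hπ : π = RingCon.mk' J.ringCon)
    (τ : A → ℂ)
    (hadd : ∀ x ∈ J, ∀ y ∈ J, τ (x + y) = τ x + τ y)
    (hsmul : ∀ (α : ℂ), ∀ x ∈ J, τ (α • x) = α * τ x)
    (hcomm : ∀ x ∈ J, ∀ b : A, τ (x * b) = τ (b * x))
    (a j : A) (hj : j ∈ J)
    (hBF : ∃ a₀ : A, IsDrazinInverse (π a) (π a₀)) :
    (∃ b : A, IsDrazinInverse (π (a + j)) (π b)) ∧
      ∀ a₀ b : A, IsDrazinInverse (π a) (π a₀) → IsDrazinInverse (π (a + j)) (π b) →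
        τ ((a + j) * b - b * (a + j)) = τ (a * a₀ - a₀ * a) :=
  bFredholm_index_perturbation_ideal_general J π hπ τ hadd hcomm a j hj hBF
end

section
/- Let X be a Banach space, X = M ⊕ N a direct sum of closed invariant subspaces of T ∈ L(X), with T|_N nilpotent of order p and T|_M Fredholm. Let T₀ be an inverse of T|_M modulo finite-rank operators on M and S = T₀ ⊕ 0. Then T^p S^p - S^p T^p is a finite-rank operator and tr(T^p S^p - S^p T^p) = p · ind(T|_M). -/
/-!
Everything happens algebraically on `M`, with `a = T|_M` and `b = T₀`. The trace of a finite-rank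
operator may be computed on any finite-dimensional subspace containing its range; hence it is
additive and `tr (f g) = tr (g f)` as soon as one factor has finite rank, so commutators with
finite-rank operators have trace zero.

Fedosov's formula `tr (a b - b a) = dim ker a - dim coker a`: replacing `b` by an inner inverse `c`
(`a c a = a`) changes the commutator only by `[a, b - c]` with `b - c` of finite rank, and
`a c - c a = (1 - c a) - (1 - a c)` is a difference of idempotents whose ranges are `ker a` and a
complement of `range a`. For powers, with `k = a^n b^n - 1` and `l = b a - 1`, the commutator of
`a^(n+1)` and `b^(n+1)` is the sum of those of `(a, b)` and `(a^n, b^n)` plus commutators with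
finite-rank operators, which gives the factor `p`. Finally `T^p S^p - S^p T^p` acts as
`a^p b^p - b^p a^p` on `M` and vanishes on `N`, where `S^p` and `T^p` vanish.
-/

/-- A bounded operator has finite rank if its range is finite dimensional. -/
def IsFiniteRank {X : Type*} [NormedAddCommGroup X] [NormedSpace ℂ X]
    (T : X →L[ℂ] X) : Prop :=
  FiniteDimensional ℂ (LinearMap.range (T : X →ₗ[ℂ] X))

/-- The trace of a finite-rank bounded operator, computed as the trace of its
restriction to its (finite-dimensional) range. -/
noncomputable def trF {X : Type*} [NormedAddCommGroup X] [NormedSpace ℂ X]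
    (T : X →L[ℂ] X) : ℂ :=
  LinearMap.trace ℂ (LinearMap.range (T : X →ₗ[ℂ] X))
    ((T : X →ₗ[ℂ] X).restrict (fun x _ => LinearMap.mem_range_self _ x))

open LinearMap Module

theorem isIdempotentElem_mul_of_mul_mul_eq_self {R : Type*} [Semigroup R] {a c : R}
    (h : a * c * a = a) : IsIdempotentElem (a * c) := by
  rw [IsIdempotentElem, ← mul_assoc, h]

theorem isIdempotentElem_mul_swap_of_mul_mul_eq_self {R : Type*} [Semigroup R] {a c : R}
    (h : a * c * a = a) : IsIdempotentElem (c * a) := by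
  rw [IsIdempotentElem, mul_assoc, ← mul_assoc a, h]

namespace LinearMap

section

variable {R V : Type*} [Ring R] [AddCommGroup V] [Module R V]

theorem pow_apply_coe_of_apply_coe {p : Submodule R V} {f : Module.End R V} {g : Module.End R p}
    (h : ∀ x : p, (g x : V) = f x) (n : ℕ) (x : p) : (f ^ n) x = ((g ^ n) x : V) := by
  simpa only [Module.End.coe_pow] using (Function.Semiconj.iterate_right h n x).symm

theorem pow_mul_pow_sub_pow_mul_pow_eq_subtype_comp {M N : Submodule R V} (hMN : IsCompl M N)
    {f g : Module.End R V} {fM gM : Module.End R M} (hf : ∀ x : M, (fM x : V) = f x)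
    (hg : ∀ x : M, (gM x : V) = g x) {p : ℕ} (hfN : ∀ x ∈ N, (f ^ p) x = 0)
    (hgN : ∀ x ∈ N, g x = 0) :
    f ^ p * g ^ p - g ^ p * f ^ p =
      M.subtype ∘ₗ (fM ^ p * gM ^ p - gM ^ p * fM ^ p) ∘ₗ M.projectionOnto N hMN := by
  refine ext_on_codisjoint hMN.codisjoint (fun x hx => ?_) (fun x hx => ?_)
  · lift x to M using hx
    simp [Submodule.projectionOnto_apply_left, pow_apply_coe_of_apply_coe hf,
      pow_apply_coe_of_apply_coe hg]
  · have hgx : (g ^ p) x = 0 := by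
      rcases p with _ | k
      · exact hfN x hx
      · simp [pow_succ, hgN x hx]
    simp [Submodule.projectionOnto_apply_of_mem_right hMN hx, hfN x hx, hgx]

theorem exists_mul_mul_eq_self {D : Type*} [DivisionRing D] [Module D V] (a : Module.End D V) :
    ∃ c : Module.End D V, a * c * a = a := by
  obtain ⟨s, hs⟩ := a.rangeRestrict.exists_rightInverse_of_surjective (range_rangeRestrict a)
  obtain ⟨c, hc⟩ := LinearMap.exists_extend s
  refine ⟨c, LinearMap.ext fun x => ?_⟩
  have hx : c (a x) = s ⟨a x, mem_range_self a x⟩ := congr($hc ⟨a x, mem_range_self a x⟩)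
  simpa [hx] using congr(($hs ⟨a x, mem_range_self a x⟩ : V))

variable {a c : Module.End R V} (h : a * c * a = a)
include h

theorem range_one_sub_mul_of_mul_mul_eq_self : range (1 - c * a) = ker a := by
  rw [← (isIdempotentElem_mul_swap_of_mul_mul_eq_self h).ker_eq_range_one_sub]
  refine le_antisymm ?_ (ker_le_ker_comp a c)
  conv_rhs => rw [← h, mul_assoc]
  exact ker_le_ker_comp (c * a) a

theorem range_mul_of_mul_mul_eq_self : range (a * c) = range a := by
  refine le_antisymm (range_comp_le_range c a) ?_
  conv_lhs => rw [← h]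
  exact range_comp_le_range a (a * c)

noncomputable def quotientRangeEquivOfMulMulEqSelf : (V ⧸ range a) ≃ₗ[R] range (1 - a * c) :=
  (Submodule.quotEquivOfEq _ _ (range_mul_of_mul_mul_eq_self h).symm).trans <|
    ((range (a * c)).quotientEquivOfIsCompl _
      (isIdempotentElem_mul_of_mul_mul_eq_self h).isCompl).trans <|
    LinearEquiv.ofEq _ _ (isIdempotentElem_mul_of_mul_mul_eq_self h).ker_eq_range_one_sub

end

variable {K U V W : Type*} [Field K] [AddCommGroup U] [Module K U] [AddCommGroup V] [Module K V]
  [AddCommGroup W] [Module K W]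

instance finiteDimensional_range_comp_left (f : V →ₗ[K] W) {g : U →ₗ[K] V}
    [FiniteDimensional K (range g)] : FiniteDimensional K (range (f ∘ₗ g)) := by
  rw [range_comp]
  exact Module.Finite.map _ _

instance finiteDimensional_range_comp_right {g : V →ₗ[K] W} (f : U →ₗ[K] V)
    [FiniteDimensional K (range g)] : FiniteDimensional K (range (g ∘ₗ f)) :=
  Submodule.finiteDimensional_of_le (range_comp_le_range f g)

variable (K V) in
def finiteRankIdeal : TwoSidedIdeal (Module.End K V) :=
  .mk' {f | FiniteDimensional K (range f)}
    (show FiniteDimensional K (range (0 : V →ₗ[K] V)) by rw [range_zero]; infer_instance)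
    (fun {f g} (_ : FiniteDimensional K (range f)) (_ : FiniteDimensional K (range g)) =>
      show FiniteDimensional K (range (f + g)) from
        Submodule.finiteDimensional_of_le (range_add_le f g))
    (fun {f} (_ : FiniteDimensional K (range f)) =>
      show FiniteDimensional K (range (-f)) by rwa [range_neg])
    (fun {f g} (_ : FiniteDimensional K (range g)) =>
      show FiniteDimensional K (range (f ∘ₗ g)) by infer_instance)
    (fun {f g} (_ : FiniteDimensional K (range f)) =>
      show FiniteDimensional K (range (f ∘ₗ g)) by infer_instance)

theorem mem_finiteRankIdeal {f : Module.End K V} :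
    f ∈ finiteRankIdeal K V ↔ FiniteDimensional K (range f) :=
  TwoSidedIdeal.mem_mk' ..

theorem commutator_mem_finiteRankIdeal (f : Module.End K V) {g : Module.End K V}
    (hg : g ∈ finiteRankIdeal K V) : f * g - g * f ∈ finiteRankIdeal K V :=
  TwoSidedIdeal.sub_mem _ (TwoSidedIdeal.mul_mem_left _ f g hg)
    (TwoSidedIdeal.mul_mem_right _ g f hg)

noncomputable def rangeTrace (f : V →ₗ[K] V) : K :=
  trace K (range f) (f.restrict fun x _ => mem_range_self f x)

theorem rangeTrace_eq_trace_restrict {f : V →ₗ[K] V} {U : Submodule K V}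
    [FiniteDimensional K U] (hU : range f ≤ U) :
    rangeTrace f = trace K U (f.restrict fun x _ => hU (mem_range_self f x)) := by
  have : FiniteDimensional K (range f) := Submodule.finiteDimensional_of_le hU
  let q : U →ₗ[K] range f := (f.domRestrict U).codRestrict (range f) fun x => mem_range_self f x
  have hfU : f.restrict (fun x _ => hU (mem_range_self f x)) = Submodule.inclusion hU ∘ₗ q := rfl
  have hf : f.restrict (fun x _ => mem_range_self f x) = q ∘ₗ Submodule.inclusion hU := rfl
  rw [rangeTrace, hfU, hf, trace_comp_comm']

theorem rangeTrace_comp_comm (f : W →ₗ[K] V) {g : V →ₗ[K] W} [FiniteDimensional K (range g)] :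
    rangeTrace (f ∘ₗ g) = rangeTrace (g ∘ₗ f) := by
  let s : range g →ₗ[K] range (f ∘ₗ g) :=
    (f.domRestrict _).codRestrict _ fun ⟨_, y, hy⟩ => ⟨y, congrArg f hy⟩
  let t : range (f ∘ₗ g) →ₗ[K] range g :=
    (g.domRestrict _).codRestrict _ fun x => mem_range_self g x
  have hfg : (f ∘ₗ g).restrict (fun x _ => mem_range_self _ x) = s ∘ₗ t := rfl
  have hgf : (g ∘ₗ f).restrict (fun x _ => range_comp_le_range f g (mem_range_self _ x)) =
      t ∘ₗ s := rfl
  rw [rangeTrace, hfg, rangeTrace_eq_trace_restrict (range_comp_le_range f g), hgf,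
    trace_comp_comm']

theorem rangeTrace_mul_comm (f : Module.End K V) {g : Module.End K V}
    (hg : g ∈ finiteRankIdeal K V) : rangeTrace (f * g) = rangeTrace (g * f) :=
  have := mem_finiteRankIdeal.mp hg
  rangeTrace_comp_comm f

theorem rangeTrace_add {f g : Module.End K V} (hf : f ∈ finiteRankIdeal K V)
    (hg : g ∈ finiteRankIdeal K V) : rangeTrace (f + g) = rangeTrace f + rangeTrace g := by
  rw [mem_finiteRankIdeal] at hf hg
  rw [rangeTrace_eq_trace_restrict (range_add_le f g),
    rangeTrace_eq_trace_restrict (le_sup_left : range f ≤ range f ⊔ range g),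
    rangeTrace_eq_trace_restrict (le_sup_right : range g ≤ range f ⊔ range g), ← map_add]
  rfl

theorem rangeTrace_sub {f g : Module.End K V} (hf : f ∈ finiteRankIdeal K V)
    (hg : g ∈ finiteRankIdeal K V) : rangeTrace (f - g) = rangeTrace f - rangeTrace g := by
  rw [eq_sub_iff_add_eq, ← rangeTrace_add (TwoSidedIdeal.sub_mem _ hf hg) hg, sub_add_cancel]

theorem rangeTrace_commutator_eq_zero (f : Module.End K V) {g : Module.End K V}
    (hg : g ∈ finiteRankIdeal K V) : rangeTrace (f * g - g * f) = 0 := by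
  rw [rangeTrace_sub (TwoSidedIdeal.mul_mem_left _ f g hg) (TwoSidedIdeal.mul_mem_right _ g f hg),
    rangeTrace_mul_comm f hg, sub_self]

theorem rangeTrace_add_commutator {f : Module.End K V} (hf : f ∈ finiteRankIdeal K V)
    (g : Module.End K V) {h : Module.End K V} (hh : h ∈ finiteRankIdeal K V) :
    rangeTrace (f + (g * h - h * g)) = rangeTrace f := by
  rw [rangeTrace_add hf (commutator_mem_finiteRankIdeal g hh), rangeTrace_commutator_eq_zero g hh,
    add_zero]

theorem rangeTrace_of_isIdempotentElem {f : Module.End K V} (hf : IsIdempotentElem f)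
    [FiniteDimensional K (range f)] : rangeTrace f = finrank K (range f) := by
  have : f.restrict (fun x _ => mem_range_self f x) = LinearMap.id := by
    ext ⟨x, hx⟩
    exact hf.mem_range_iff.mp hx
  rw [rangeTrace, this, trace_id]

theorem rangeTrace_subtype_comp_comp_projectionOnto {p q : Submodule K V} (hpq : IsCompl p q)
    (g : Module.End K p) [FiniteDimensional K (range g)] :
    rangeTrace (p.subtype ∘ₗ g ∘ₗ p.projectionOnto q hpq) = rangeTrace g := by
  rw [rangeTrace_comp_comm, comp_assoc, Submodule.projectionOnto_comp_subtype, comp_id]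

theorem rangeTrace_commutator_of_mul_mul_eq_self {a c : Module.End K V} (h : a * c * a = a)
    [FiniteDimensional K (ker a)] [FiniteDimensional K (V ⧸ range a)] :
    rangeTrace (a * c - c * a) = finrank K (ker a) - finrank K (V ⧸ range a) := by
  have e := quotientRangeEquivOfMulMulEqSelf h
  have : FiniteDimensional K (range (1 - a * c)) := e.finiteDimensional
  have : FiniteDimensional K (range (1 - c * a)) := by
    rw [range_one_sub_mul_of_mul_mul_eq_self h]; infer_instance
  rw [show a * c - c * a = (1 - c * a) - (1 - a * c) by abel,
    rangeTrace_sub (mem_finiteRankIdeal.mpr ‹_›) (mem_finiteRankIdeal.mpr ‹_›),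
    rangeTrace_of_isIdempotentElem (isIdempotentElem_mul_swap_of_mul_mul_eq_self h).one_sub,
    rangeTrace_of_isIdempotentElem (isIdempotentElem_mul_of_mul_mul_eq_self h).one_sub,
    range_one_sub_mul_of_mul_mul_eq_self h, e.finrank_eq]

def IsInverseModFiniteRank (a b : Module.End K V) : Prop :=
  a * b - 1 ∈ finiteRankIdeal K V ∧ b * a - 1 ∈ finiteRankIdeal K V

namespace IsInverseModFiniteRank

variable {a b c d : Module.End K V}

theorem of_mul_mul_eq_self (h : a * c * a = a) [FiniteDimensional K (ker a)]
    [FiniteDimensional K (V ⧸ range a)] : IsInverseModFiniteRank a c := by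
  have : FiniteDimensional K (range (1 - a * c)) :=
    (quotientRangeEquivOfMulMulEqSelf h).finiteDimensional
  have : FiniteDimensional K (range (1 - c * a)) := by
    rw [range_one_sub_mul_of_mul_mul_eq_self h]; infer_instance
  refine ⟨?_, ?_⟩ <;> rw [← neg_sub] <;>
    exact TwoSidedIdeal.neg_mem _ (mem_finiteRankIdeal.mpr ‹_›)

theorem commutator_mem (hab : IsInverseModFiniteRank a b) :
    a * b - b * a ∈ finiteRankIdeal K V := by
  simpa using TwoSidedIdeal.sub_mem _ hab.1 hab.2

theorem sub_mem (hab : IsInverseModFiniteRank a b) (hac : IsInverseModFiniteRank a c) :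
    b - c ∈ finiteRankIdeal K V := by
  rw [show b - c = (b * a - 1) * c - b * (a * c - 1) by noncomm_ring]
  exact TwoSidedIdeal.sub_mem _ (TwoSidedIdeal.mul_mem_right _ _ _ hab.2)
    (TwoSidedIdeal.mul_mem_left _ _ _ hac.1)

theorem mul (hab : IsInverseModFiniteRank a b) (hcd : IsInverseModFiniteRank c d) :
    IsInverseModFiniteRank (a * c) (d * b) := by
  constructor
  · rw [show a * c * (d * b) - 1 = a * ((c * d - 1) * b) + (a * b - 1) by noncomm_ring]
    exact TwoSidedIdeal.add_mem _
      (TwoSidedIdeal.mul_mem_left _ _ _ (TwoSidedIdeal.mul_mem_right _ _ _ hcd.1)) hab.1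
  · rw [show d * b * (a * c) - 1 = d * ((b * a - 1) * c) + (d * c - 1) by noncomm_ring]
    exact TwoSidedIdeal.add_mem _
      (TwoSidedIdeal.mul_mem_left _ _ _ (TwoSidedIdeal.mul_mem_right _ _ _ hab.2)) hcd.2

theorem pow (hab : IsInverseModFiniteRank a b) (n : ℕ) :
    IsInverseModFiniteRank (a ^ n) (b ^ n) := by
  induction n with
  | zero => simp [IsInverseModFiniteRank]
  | succ n ih =>
    rw [pow_succ', pow_succ]
    exact hab.mul ih

theorem rangeTrace_commutator_eq (hab : IsInverseModFiniteRank a b)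
    (hac : IsInverseModFiniteRank a c) :
    rangeTrace (a * b - b * a) = rangeTrace (a * c - c * a) := by
  rw [show a * b - b * a = (a * c - c * a) + (a * (b - c) - (b - c) * a) by noncomm_ring,
    rangeTrace_add_commutator hac.commutator_mem a (hab.sub_mem hac)]

theorem rangeTrace_commutator_eq_index (hab : IsInverseModFiniteRank a b)
    [FiniteDimensional K (ker a)] [FiniteDimensional K (V ⧸ range a)] :
    rangeTrace (a * b - b * a) = finrank K (ker a) - finrank K (V ⧸ range a) := by
  obtain ⟨c, hc⟩ := exists_mul_mul_eq_self a
  rw [hab.rangeTrace_commutator_eq (of_mul_mul_eq_self hc),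
    rangeTrace_commutator_of_mul_mul_eq_self hc]

theorem rangeTrace_commutator_mul (hab : IsInverseModFiniteRank a b)
    (hcd : IsInverseModFiniteRank c d) :
    rangeTrace (a * c * (d * b) - d * b * (a * c)) =
      rangeTrace (a * b - b * a) + rangeTrace (c * d - d * c) := by
  set k := c * d - 1
  set l := b * a - 1
  have hX := TwoSidedIdeal.add_mem _ hab.commutator_mem hcd.commutator_mem
  have hkb := TwoSidedIdeal.mul_mem_right _ k b hcd.1
  have hlc := TwoSidedIdeal.mul_mem_right _ l c hab.2
  have hA := commutator_mem_finiteRankIdeal a hkb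
  have hB := commutator_mem_finiteRankIdeal d hlc
  rw [show a * c * (d * b) - d * b * (a * c) = (a * b - b * a) + (c * d - d * c) +
      (a * (k * b) - k * b * a) - (d * (l * c) - l * c * d) + (k * l - l * k) by
        simp only [k, l]; noncomm_ring,
    rangeTrace_add_commutator (TwoSidedIdeal.sub_mem _ (TwoSidedIdeal.add_mem _ hX hA) hB) k hab.2,
    rangeTrace_sub (TwoSidedIdeal.add_mem _ hX hA) hB, rangeTrace_commutator_eq_zero d hlc,
    sub_zero, rangeTrace_add hX hA, rangeTrace_commutator_eq_zero a hkb, add_zero,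
    rangeTrace_add hab.commutator_mem hcd.commutator_mem]

theorem rangeTrace_commutator_pow (hab : IsInverseModFiniteRank a b) (n : ℕ) :
    rangeTrace (a ^ n * b ^ n - b ^ n * a ^ n) = n * rangeTrace (a * b - b * a) := by
  induction n with
  | zero => simpa using rangeTrace_commutator_eq_zero 1 (TwoSidedIdeal.zero_mem _)
  | succ n ih =>
    rw [pow_succ', pow_succ, hab.rangeTrace_commutator_mul (hab.pow n), ih]
    push_cast
    ring

end IsInverseModFiniteRank

end LinearMap

theorem trace_commutator_pow_general
    {X : Type*} [NormedAddCommGroup X] [NormedSpace ℂ X]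
    (T : X →L[ℂ] X) (M N : Submodule ℂ X)
    (hcompl : IsCompl M N)
    -- `T|_N` is nilpotent of order `p`
    (p : ℕ) (hnil : ∀ x ∈ N, (T ^ p) x = 0)
    -- `TM` is the restriction `T|_M`, and it is Fredholm
    (TM : M →L[ℂ] M) (hTMdef : ∀ x : M, (TM x : X) = T x)
    (hker : FiniteDimensional ℂ (LinearMap.ker (TM : M →ₗ[ℂ] M)))
    (hcoker : FiniteDimensional ℂ (M ⧸ LinearMap.range (TM : M →ₗ[ℂ] M)))
    -- `T₀` is an inverse of `T|_M` modulo the finite-rank operators on `M`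
    (T₀ : M →L[ℂ] M)
    (hT₀₁ : FiniteDimensional ℂ (LinearMap.range ((TM * T₀ - 1 : M →L[ℂ] M) : M →ₗ[ℂ] M)))
    (hT₀₂ : FiniteDimensional ℂ (LinearMap.range ((T₀ * TM - 1 : M →L[ℂ] M) : M →ₗ[ℂ] M)))
    -- `S = T₀ ⊕ 0`
    (S : X →L[ℂ] X) (hSM : ∀ x : M, S x = (T₀ x : X)) (hSN : ∀ x ∈ N, S x = 0) :
    IsFiniteRank (T ^ p * S ^ p - S ^ p * T ^ p) ∧
      trF (T ^ p * S ^ p - S ^ p * T ^ p) =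
        ((p : ℤ) * ((Module.finrank ℂ (LinearMap.ker (TM : M →ₗ[ℂ] M)) : ℤ) -
          (Module.finrank ℂ (M ⧸ LinearMap.range (TM : M →ₗ[ℂ] M)) : ℤ)) : ℤ) := by
  set a : Module.End ℂ M := (TM : M →ₗ[ℂ] M)
  set b : Module.End ℂ M := (T₀ : M →ₗ[ℂ] M)
  have hab : IsInverseModFiniteRank a b :=
    ⟨mem_finiteRankIdeal.mpr hT₀₁, mem_finiteRankIdeal.mpr hT₀₂⟩
  have hdecomp : ((T ^ p * S ^ p - S ^ p * T ^ p : X →L[ℂ] X) : X →ₗ[ℂ] X) =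
      M.subtype ∘ₗ (a ^ p * b ^ p - b ^ p * a ^ p) ∘ₗ M.projectionOnto N hcompl := by
    simpa using pow_mul_pow_sub_pow_mul_pow_eq_subtype_comp hcompl hTMdef (fun x => (hSM x).symm)
      (fun x hx => by rw [← ContinuousLinearMap.toLinearMap_pow]; exact hnil x hx) hSN
  have := mem_finiteRankIdeal.mp (hab.pow p).commutator_mem
  refine ⟨?_, ?_⟩
  · rw [IsFiniteRank, hdecomp]
    infer_instance
  · change rangeTrace _ = _
    rw [hdecomp, rangeTrace_subtype_comp_comp_projectionOnto, hab.rangeTrace_commutator_pow,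
      hab.rangeTrace_commutator_eq_index]
    push_cast
    ring

/-- With `X = M ⊕ N`, `T|_N` nilpotent of order `p`, `T|_M` Fredholm with
parametrix `T₀`, and `S = T₀ ⊕ 0`, the operator `T^p S^p - S^p T^p` is of finite
rank and its trace equals `p · ind(T|_M)`. -/
theorem trace_commutator_pow
    {X : Type*} [NormedAddCommGroup X] [NormedSpace ℂ X] [CompleteSpace X]
    (T : X →L[ℂ] X) (M N : Submodule ℂ X)
    (hMclosed : IsClosed (M : Set X)) (hNclosed : IsClosed (N : Set X))
    (hcompl : IsCompl M N)
    (hTM : ∀ x ∈ M, T x ∈ M) (hTN : ∀ x ∈ N, T x ∈ N)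
    -- `T|_N` is nilpotent of order `p`
    (p : ℕ) (hnil : ∀ x ∈ N, (T ^ p) x = 0)
    -- `TM` is the restriction `T|_M`, and it is Fredholm
    (TM : M →L[ℂ] M) (hTMdef : ∀ x : M, (TM x : X) = T x)
    (hker : FiniteDimensional ℂ (LinearMap.ker (TM : M →ₗ[ℂ] M)))
    (hclosed : IsClosed (LinearMap.range (TM : M →ₗ[ℂ] M) : Set M))
    (hcoker : FiniteDimensional ℂ (M ⧸ LinearMap.range (TM : M →ₗ[ℂ] M)))
    -- `T₀` is an inverse of `T|_M` modulo the finite-rank operators on `M`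
    (T₀ : M →L[ℂ] M)
    (hT₀₁ : FiniteDimensional ℂ (LinearMap.range ((TM * T₀ - 1 : M →L[ℂ] M) : M →ₗ[ℂ] M)))
    (hT₀₂ : FiniteDimensional ℂ (LinearMap.range ((T₀ * TM - 1 : M →L[ℂ] M) : M →ₗ[ℂ] M)))
    -- `S = T₀ ⊕ 0`
    (S : X →L[ℂ] X) (hSM : ∀ x : M, S x = (T₀ x : X)) (hSN : ∀ x ∈ N, S x = 0) :
    IsFiniteRank (T ^ p * S ^ p - S ^ p * T ^ p) ∧
      trF (T ^ p * S ^ p - S ^ p * T ^ p) =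
        ((p : ℤ) * ((Module.finrank ℂ (LinearMap.ker (TM : M →ₗ[ℂ] M)) : ℤ) -
          (Module.finrank ℂ (M ⧸ LinearMap.range (TM : M →ₗ[ℂ] M)) : ℤ)) : ℤ) :=
  trace_commutator_pow_general T M N hcompl p hnil TM hTMdef hker hcoker T₀ hT₀₁ hT₀₂ S hSM hSN
end
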